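/- arXiv:2210.05994 — 2 statements merged into one kernel-verified Lean document; each statement's English description precedes it below -/
import Mathlib

section
/- Let n ≥ 1 and let F_1, …, F_n : ℝ^d → ℝ^d be operators with average F = (1/n)∑_{i=1}^n F_i. Suppose each F_i is ℓ-cocoercive and F is μ-strongly monotone. Take the stepsize γ = 2/(9ℓ) and any natural number K with K ≥ 10ℓ/μ. Then for every number of epochs S ≥ 1, the SARAH outer-loop iterates satisfy 𝔼[‖F(z̃^S)‖²] ≤ (1/2)^S · ‖F(z̃⁰)‖². -/
open Finset

noncomputable section

/-- An operator `G : ℝ^d → ℝ^d` is `ℓ`-cocoercive: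
`‖G(u) - G(v)‖² ≤ ℓ ⟨G(u) - G(v), u - v⟩` for all `u, v`. -/
def Cocoercive {d : ℕ} (ℓ : ℝ)
    (G : EuclideanSpace ℝ (Fin d) → EuclideanSpace ℝ (Fin d)) : Prop :=
  ∀ u v : EuclideanSpace ℝ (Fin d),
    ‖G u - G v‖ ^ 2 ≤ ℓ * (inner ℝ (G u - G v) (u - v) : ℝ)

/-- An operator `G : ℝ^d → ℝ^d` is `μ`-strongly monotone:
`⟨G(u) - G(v), u - v⟩ ≥ μ ‖u - v‖²` for all `u, v`. -/
def StronglyMonotone {d : ℕ} (μ : ℝ)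
    (G : EuclideanSpace ℝ (Fin d) → EuclideanSpace ℝ (Fin d)) : Prop :=
  ∀ u v : EuclideanSpace ℝ (Fin d),
    μ * ‖u - v‖ ^ 2 ≤ (inner ℝ (G u - G v) (u - v) : ℝ)

/-- The average operator `F = (1/n) ∑_{i=1}^n F_i`. -/
def opAvg {d n : ℕ} (F : Fin n → EuclideanSpace ℝ (Fin d) → EuclideanSpace ℝ (Fin d)) :
    EuclideanSpace ℝ (Fin d) → EuclideanSpace ℝ (Fin d) :=
  fun z => (n : ℝ)⁻¹ • ∑ i, F i z

/-- One step of the SARAH recursion: from `(z, v)` and index `i`, go to `(z', v')`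
with `z' = z - γ v` and `v' = F_i(z') - F_i(z) + v`. -/
def sarahStep {d n : ℕ} (γ : ℝ)
    (F : Fin n → EuclideanSpace ℝ (Fin d) → EuclideanSpace ℝ (Fin d)) (i : Fin n)
    (p : EuclideanSpace ℝ (Fin d) × EuclideanSpace ℝ (Fin d)) :
    EuclideanSpace ℝ (Fin d) × EuclideanSpace ℝ (Fin d) :=
  (p.1 - γ • p.2, F i (p.1 - γ • p.2) - F i p.1 + p.2)

/-- Run SARAH steps along a list of indices. -/
def sarahRun {d n : ℕ} (γ : ℝ)
    (F : Fin n → EuclideanSpace ℝ (Fin d) → EuclideanSpace ℝ (Fin d)) :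
    EuclideanSpace ℝ (Fin d) × EuclideanSpace ℝ (Fin d) → List (Fin n) →
      EuclideanSpace ℝ (Fin d) × EuclideanSpace ℝ (Fin d)
  | p, [] => p
  | p, i :: l => sarahRun γ F (sarahStep γ F i p) l

/-- The SARAH inner-loop trajectory `(z^k, v^k)` started at `z^0 = z0` with
`v^0 = F(z^0)`, for the index sequence `j : Fin K → Fin n` (so `i_k = j (k-1)`):
`sarahTraj γ F z0 j k = (z^k, v^k)` is obtained by performing the SARAH steps
with the first `k` indices `i_1, …, i_k`. -/
def sarahTraj {d n K : ℕ} (γ : ℝ)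
    (F : Fin n → EuclideanSpace ℝ (Fin d) → EuclideanSpace ℝ (Fin d))
    (z0 : EuclideanSpace ℝ (Fin d)) (j : Fin K → Fin n) (k : ℕ) :
    EuclideanSpace ℝ (Fin d) × EuclideanSpace ℝ (Fin d) :=
  sarahRun γ F (z0, opAvg F z0) ((List.ofFn j).take k)

/-- The SARAH outer loop: starting from `z̃`, each epoch runs the inner loop
(restarted with `v^0 = F(z̃)`) along its list of indices and moves to the endpoint. -/
def sarahOuter {d n : ℕ} (γ : ℝ)
    (F : Fin n → EuclideanSpace ℝ (Fin d) → EuclideanSpace ℝ (Fin d)) :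
    EuclideanSpace ℝ (Fin d) → List (List (Fin n)) → EuclideanSpace ℝ (Fin d)
  | z, [] => z
  | z, l :: ls => sarahOuter γ F (sarahRun γ F (z, opAvg F z) l).1 ls


/-!
Each inner step contracts the estimator in mean square,
`𝔼‖vᵏ⁺¹‖² ≤ (1 - (2 - ℓγ)μγ) 𝔼‖vᵏ‖²`, by cocoercivity of every `Fᵢ` and strong monotonicity
of `F`; and the potential `‖F(zᵏ) - vᵏ‖² + ‖vᵏ‖²/8` does not increase in expectation, by
cocoercivity alone once the variance of `Fᵢ(zᵏ⁺¹) - Fᵢ(zᵏ)` is bounded by its second moment.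
As `v⁰ = F(z⁰)`, the potential starts at `‖F(z⁰)‖²/8`, and `‖F(zᴷ)‖² ≤ 2‖vᴷ‖² + 2·potential`
halves `𝔼‖F‖²` over an epoch as soon as the contraction factor to the power `K` is at most
`1/8`, which `K ≥ 10ℓ/μ` guarantees. Expectations are sums over index sequences, and
all bounds propagate through both loops by peeling off one index (one epoch) at a time.
-/

open scoped RealInnerProductSpace

theorem sum_foldl_ofFn_le_pow_mul {α ι : Type*} [Fintype ι] (f : α → ι → α) (g : α → ℝ)
    {c : ℝ} (hc : 0 ≤ c) (hf : ∀ p, ∑ i, g (f p i) ≤ c * g p) (k : ℕ) (p : α) :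
    ∑ j : Fin k → ι, g ((List.ofFn j).foldl f p) ≤ c ^ k * g p := by
  induction k generalizing p with
  | zero => simp
  | succ k ih =>
    rw [← (Fin.consEquiv fun _ => ι).sum_comp, Fintype.sum_prod_type]
    calc ∑ i, ∑ j : Fin k → ι, g ((List.ofFn (Fin.cons i j)).foldl f p)
        = ∑ i, ∑ j : Fin k → ι, g ((List.ofFn j).foldl f (f p i)) := by
          simp [List.ofFn_succ]
      _ ≤ ∑ i, c ^ k * g (f p i) := sum_le_sum fun i _ => ih (f p i)
      _ = c ^ k * ∑ i, g (f p i) := (mul_sum ..).symm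
      _ ≤ c ^ (k + 1) * g p := by
          rw [pow_succ, mul_assoc]
          exact mul_le_mul_of_nonneg_left (hf p) (pow_nonneg hc k)

theorem sum_norm_add_sub_sq {E ι : Type*} [NormedAddCommGroup E] [InnerProductSpace ℝ E]
    [Fintype ι] (w m : E) (x : ι → E) (hm : ∑ i, x i = (Fintype.card ι : ℝ) • m) :
    ∑ i, ‖w + (m - x i)‖ ^ 2
      = Fintype.card ι * ‖w‖ ^ 2 + ∑ i, ‖x i‖ ^ 2 - Fintype.card ι * ‖m‖ ^ 2 := by
  simp only [norm_add_sq_real, norm_sub_sq_real, inner_sub_right, sum_add_distrib,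
    sum_sub_distrib, ← mul_sum, ← inner_sum, hm, real_inner_smul_right, sum_const, card_univ,
    real_inner_self_eq_norm_sq, ← Nat.cast_smul_eq_nsmul ℝ]
  ring

theorem max_one_sub_pow_le_inv_eight {x : ℝ} {K : ℕ} (h : 3 ≤ K * x) :
    max (1 - x) 0 ^ K ≤ 1 / 8 := by
  have hexp : max (1 - x) 0 ≤ Real.exp (-x) :=
    max_le (Real.one_sub_le_exp_neg x) (Real.exp_pos _).le
  have h8 : 8 < Real.exp 3 := by
    have := Real.add_one_lt_exp (one_ne_zero (α := ℝ))
    calc (8 : ℝ) = 2 ^ 3 := by norm_num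
      _ < Real.exp 1 ^ 3 := by gcongr; linarith
      _ = Real.exp 3 := by rw [← Real.exp_nat_mul]; norm_num
  calc max (1 - x) 0 ^ K ≤ Real.exp (-x) ^ K := by gcongr
    _ = (Real.exp (K * x))⁻¹ := by rw [← Real.exp_nat_mul, ← Real.exp_neg, mul_neg]
    _ ≤ 1 / 8 := by
      rw [one_div]
      exact inv_anti₀ (by norm_num) (h8.le.trans (Real.exp_le_exp.2 h))

section Operators

variable {d : ℕ} {G : EuclideanSpace ℝ (Fin d) → EuclideanSpace ℝ (Fin d)}

theorem Cocoercive.norm_sub_sq_le {ℓ : ℝ} (h : Cocoercive ℓ G) (z v : EuclideanSpace ℝ (Fin d))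
    (γ : ℝ) : ‖G (z - γ • v) - G z‖ ^ 2 ≤ -(ℓ * γ) * ⟪G (z - γ • v) - G z, v⟫ := by
  simpa [inner_neg_right, real_inner_smul_right, mul_assoc] using h (z - γ • v) z

theorem StronglyMonotone.inner_sub_le {μ γ : ℝ} (h : StronglyMonotone μ G)
    (z v : EuclideanSpace ℝ (Fin d)) (hγ : 0 < γ) :
    ⟪G (z - γ • v) - G z, v⟫ ≤ -(μ * γ) * ‖v‖ ^ 2 := by
  have := h (z - γ • v) z
  simp only [sub_sub_cancel_left, norm_neg, norm_smul, Real.norm_of_nonneg hγ.le,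
    inner_neg_right, real_inner_smul_right] at this
  nlinarith

end Operators

theorem sum_sub_eq_smul_opAvg_sub {d n : ℕ} (hn : n ≠ 0)
    (F : Fin n → EuclideanSpace ℝ (Fin d) → EuclideanSpace ℝ (Fin d))
    (x y : EuclideanSpace ℝ (Fin d)) :
    ∑ i, (F i x - F i y) = (n : ℝ) • (opAvg F x - opAvg F y) := by
  simp only [opAvg, ← smul_sub, smul_smul, mul_inv_cancel₀ (Nat.cast_ne_zero (R := ℝ) |>.2 hn),
    one_smul, sum_sub_distrib]

def sarahPotential {d n : ℕ} (F : Fin n → EuclideanSpace ℝ (Fin d) → EuclideanSpace ℝ (Fin d))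
    (p : EuclideanSpace ℝ (Fin d) × EuclideanSpace ℝ (Fin d)) : ℝ :=
  ‖opAvg F p.1 - p.2‖ ^ 2 + ‖p.2‖ ^ 2 / 8

section Step

variable {d n : ℕ} {ℓ μ γ : ℝ} {F : Fin n → EuclideanSpace ℝ (Fin d) → EuclideanSpace ℝ (Fin d)}

theorem sum_norm_sarahStep_snd_sq_le (hn : n ≠ 0) (hco : ∀ i, Cocoercive ℓ (F i))
    (hsm : StronglyMonotone μ (opAvg F)) (hγ : 0 < γ) (hℓγ : ℓ * γ ≤ 2)
    (p : EuclideanSpace ℝ (Fin d) × EuclideanSpace ℝ (Fin d)) :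
    ∑ i, ‖(sarahStep γ F i p).2‖ ^ 2 ≤ n * (1 - (2 - ℓ * γ) * μ * γ) * ‖p.2‖ ^ 2 := by
  obtain ⟨z, v⟩ := p
  set D := fun i => F i (z - γ • v) - F i z
  have hsum : ∑ i, ⟪D i, v⟫ = n * ⟪opAvg F (z - γ • v) - opAvg F z, v⟫ := by
    rw [← sum_inner, sum_sub_eq_smul_opAvg_sub hn, real_inner_smul_left]
  have hΔ := hsm.inner_sub_le z v hγ
  calc ∑ i, ‖(sarahStep γ F i (z, v)).2‖ ^ 2
      = ∑ i, (‖D i‖ ^ 2 + 2 * ⟪D i, v⟫ + ‖v‖ ^ 2) := by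
        simp only [sarahStep, norm_add_sq_real, D]
    _ ≤ ∑ i, ((2 - ℓ * γ) * ⟪D i, v⟫ + ‖v‖ ^ 2) :=
        sum_le_sum fun i _ => by linarith [(hco i).norm_sub_sq_le z v γ]
    _ = (2 - ℓ * γ) * (n * ⟪opAvg F (z - γ • v) - opAvg F z, v⟫) + n * ‖v‖ ^ 2 := by
        simp [sum_add_distrib, ← mul_sum, hsum]
    _ ≤ n * (1 - (2 - ℓ * γ) * μ * γ) * ‖v‖ ^ 2 := by
        have hcoef : (0 : ℝ) ≤ (2 - ℓ * γ) * n := mul_nonneg (by linarith) n.cast_nonneg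
        nlinarith

theorem sum_sarahPotential_sarahStep_le (hn : n ≠ 0) (hco : ∀ i, Cocoercive ℓ (F i))
    (hℓ : 0 < ℓ) (hγ : 0 < γ) (hℓγ : ℓ * γ ≤ 2 / 9)
    (p : EuclideanSpace ℝ (Fin d) × EuclideanSpace ℝ (Fin d)) :
    ∑ i, sarahPotential F (sarahStep γ F i p) ≤ n * sarahPotential F p := by
  obtain ⟨z, v⟩ := p
  set D := fun i => F i (z - γ • v) - F i z
  set Δ := opAvg F (z - γ • v) - opAvg F z
  have hvar := sum_norm_add_sub_sq (opAvg F z - v) Δ D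
    (by rw [Fintype.card_fin]; exact sum_sub_eq_smul_opAvg_sub hn F _ _)
  have hres : ∀ i, opAvg F (z - γ • v) - (D i + v) = opAvg F z - v + (Δ - D i) := fun i => by
    simp only [D, Δ]
    abel
  -- cocoercivity with `ℓγ ≤ 2/9` exactly cancels the growth of `‖v‖²/8`
  have hD : ∀ i, 9 * ‖D i‖ ^ 2 + 2 * ⟪D i, v⟫ ≤ 0 := fun i => by
    have := (hco i).norm_sub_sq_le z v γ
    nlinarith [mul_pos hℓ hγ, sq_nonneg ‖D i‖]
  calc ∑ i, sarahPotential F (sarahStep γ F i (z, v))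
      = ∑ i, ‖opAvg F z - v + (Δ - D i)‖ ^ 2
          + ∑ i, (‖D i‖ ^ 2 + 2 * ⟪D i, v⟫ + ‖v‖ ^ 2) / 8 := by
        rw [← sum_add_distrib]
        refine sum_congr rfl fun i _ => ?_
        change ‖opAvg F (z - γ • v) - (D i + v)‖ ^ 2 + ‖D i + v‖ ^ 2 / 8 = _
        rw [hres, norm_add_sq_real (D i)]
    _ = n * sarahPotential F (z, v) - n * ‖Δ‖ ^ 2
          + ∑ i, (9 * ‖D i‖ ^ 2 + 2 * ⟪D i, v⟫) / 8 := by
        simp only [hvar, sarahPotential, Fintype.card_fin, ← sum_div, sum_add_distrib, ← mul_sum,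
          sum_const, card_univ, nsmul_eq_mul]
        ring
    _ ≤ n * sarahPotential F (z, v) := by
        have hsum := sum_nonpos fun i (_ : i ∈ univ) =>
          div_nonpos_of_nonpos_of_nonneg (hD i) (by norm_num : (0 : ℝ) ≤ 8)
        nlinarith [sq_nonneg ‖Δ‖, n.cast_nonneg (α := ℝ)]

end Step

section Loops

variable {d n : ℕ} {γ : ℝ} {F : Fin n → EuclideanSpace ℝ (Fin d) → EuclideanSpace ℝ (Fin d)}

theorem sarahRun_eq_foldl (p : EuclideanSpace ℝ (Fin d) × EuclideanSpace ℝ (Fin d))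
    (l : List (Fin n)) : sarahRun γ F p l = l.foldl (fun q i => sarahStep γ F i q) p := by
  induction l generalizing p with
  | nil => rfl
  | cons i l ih => exact ih _

theorem sarahOuter_eq_foldl (z : EuclideanSpace ℝ (Fin d)) (ls : List (List (Fin n))) :
    sarahOuter γ F z ls = ls.foldl (fun x l => (sarahRun γ F (x, opAvg F x) l).1) z := by
  induction ls generalizing z with
  | nil => rfl
  | cons l ls ih => exact ih _

variable {ℓ μ : ℝ}

theorem sum_norm_opAvg_sarahRun_sq_le (hn : n ≠ 0) (hco : ∀ i, Cocoercive ℓ (F i))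
    (hsm : StronglyMonotone μ (opAvg F)) (hℓ : 0 < ℓ) (hγ : 0 < γ) (hℓγ : ℓ * γ ≤ 2 / 9)
    {K : ℕ} (hK : max (1 - (2 - ℓ * γ) * μ * γ) 0 ^ K ≤ 1 / 8) (z : EuclideanSpace ℝ (Fin d)) :
    ∑ j : Fin K → Fin n, ‖opAvg F (sarahRun γ F (z, opAvg F z) (List.ofFn j)).1‖ ^ 2
      ≤ n ^ K / 2 * ‖opAvg F z‖ ^ 2 := by
  set ρ := max (1 - (2 - ℓ * γ) * μ * γ) 0
  set step := fun q i => sarahStep γ F i q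
  have hv := sum_foldl_ofFn_le_pow_mul step (fun q => ‖q.2‖ ^ 2)
    (mul_nonneg n.cast_nonneg (le_max_right _ 0))
    (fun q => (sum_norm_sarahStep_snd_sq_le hn hco hsm hγ (by linarith) q).trans
      (by gcongr; exact le_max_left _ _)) K (z, opAvg F z)
  have hV := sum_foldl_ofFn_le_pow_mul step (sarahPotential F) n.cast_nonneg
    (sum_sarahPotential_sarahStep_le hn hco hℓ hγ hℓγ) K (z, opAvg F z)
  have hV₀ : sarahPotential F (z, opAvg F z) = ‖opAvg F z‖ ^ 2 / 8 := by simp [sarahPotential]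
  have hsplit : ∀ q : EuclideanSpace ℝ (Fin d) × EuclideanSpace ℝ (Fin d),
      ‖opAvg F q.1‖ ^ 2 ≤ 2 * ‖q.2‖ ^ 2 + 2 * sarahPotential F q := fun q => by
    have htri : ‖opAvg F q.1‖ ^ 2 ≤ 2 * (‖q.2‖ ^ 2 + ‖opAvg F q.1 - q.2‖ ^ 2) :=
      (pow_le_pow_left₀ (norm_nonneg _) (norm_le_norm_add_norm_sub' _ _) 2).trans add_sq_le
    simp only [sarahPotential]
    nlinarith [sq_nonneg ‖q.2‖]
  simp only [sarahRun_eq_foldl]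
  calc ∑ j : Fin K → Fin n, ‖opAvg F ((List.ofFn j).foldl step (z, opAvg F z)).1‖ ^ 2
      ≤ ∑ j : Fin K → Fin n, (2 * ‖((List.ofFn j).foldl step (z, opAvg F z)).2‖ ^ 2
          + 2 * sarahPotential F ((List.ofFn j).foldl step (z, opAvg F z))) :=
        sum_le_sum fun j _ => hsplit _
    _ ≤ 2 * ((n * ρ) ^ K * ‖opAvg F z‖ ^ 2) + 2 * (n ^ K * (‖opAvg F z‖ ^ 2 / 8)) := by
        rw [sum_add_distrib, ← mul_sum, ← mul_sum, ← hV₀]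
        gcongr
    _ ≤ n ^ K / 2 * ‖opAvg F z‖ ^ 2 := by
        rw [mul_pow]
        have hρK : (n : ℝ) ^ K * ρ ^ K * ‖opAvg F z‖ ^ 2
            ≤ n ^ K * (1 / 8) * ‖opAvg F z‖ ^ 2 := by
          gcongr
        linarith

end Loops

theorem sarah_linear_convergence_general {d n : ℕ} (hn : 1 ≤ n) (ℓ μ : ℝ) (hℓ : 0 < ℓ)
    (hμ : 0 < μ)
    (F : Fin n → EuclideanSpace ℝ (Fin d) → EuclideanSpace ℝ (Fin d))
    (hco : ∀ i, Cocoercive ℓ (F i)) (hsm : StronglyMonotone μ (opAvg F))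
    (K : ℕ) (hKμ : 10 * ℓ / μ ≤ (K : ℝ)) (S : ℕ)
    (z0 : EuclideanSpace ℝ (Fin d)) :
    (∑ jj : Fin S → Fin K → Fin n,
        ‖opAvg F (sarahOuter (2 / (9 * ℓ)) F z0
            (List.ofFn fun s => List.ofFn (jj s)))‖ ^ 2) / (n : ℝ) ^ (S * K)
      ≤ (1 / 2) ^ S * ‖opAvg F z0‖ ^ 2 := by
  set γ := 2 / (9 * ℓ)
  have hn0 : n ≠ 0 := by omega
  have hγ : 0 < γ := by positivity
  have hℓγ : ℓ * γ = 2 / 9 := by simp only [γ]; field_simp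
  have hrate : max (1 - (2 - ℓ * γ) * μ * γ) 0 ^ K ≤ 1 / 8 := by
    refine max_one_sub_pow_le_inv_eight ?_
    have hx : 10 * ℓ / μ * ((2 - ℓ * γ) * μ * γ) = 10 * (2 - ℓ * γ) * (ℓ * γ) := by
      field_simp
    rw [hℓγ] at hx ⊢
    have hK := mul_le_mul_of_nonneg_right hKμ (by positivity : 0 ≤ (2 - 2 / 9) * μ * γ)
    linarith
  have houter := sum_foldl_ofFn_le_pow_mul
    (fun x j => (sarahRun γ F (x, opAvg F x) (List.ofFn j)).1) (fun x => ‖opAvg F x‖ ^ 2)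
    (by positivity)
    (sum_norm_opAvg_sarahRun_sq_le hn0 hco hsm hℓ hγ hℓγ.le hrate) S z0
  rw [div_le_iff₀ (by positivity)]
  have hlist : ∀ jj : Fin S → Fin K → Fin n,
      (List.ofFn fun s => List.ofFn (jj s)) = (List.ofFn jj).map List.ofFn :=
    fun jj => (List.map_ofFn (f := jj) (g := List.ofFn)).symm
  simp only [sarahOuter_eq_foldl, hlist, List.foldl_map]
  calc _ ≤ ((n : ℝ) ^ K / 2) ^ S * ‖opAvg F z0‖ ^ 2 := houter
    _ = _ := by rw [div_eq_mul_one_div, mul_pow, ← pow_mul, mul_comm K S]; ring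

/-- **Linear convergence of SARAH (outer loop).** If each `F_i` is `ℓ`-cocoercive and
the average `F` is `μ`-strongly monotone, then with stepsize `γ = 2/(9ℓ)`, any number
of inner steps `K ≥ 10ℓ/μ` and any number of epochs `S ≥ 1`, the SARAH outer iterates
satisfy `𝔼[‖F(z̃^S)‖²] ≤ (1/2)^S ‖F(z̃^0)‖²`, where the expectation is the uniform
average over all `n^{SK}` tuples of index sequences `(i^1, …, i^S)`. -/
theorem sarah_linear_convergence {d n : ℕ} (hn : 1 ≤ n) (ℓ μ : ℝ) (hℓ : 0 < ℓ)
    (hμ : 0 < μ)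
    (F : Fin n → EuclideanSpace ℝ (Fin d) → EuclideanSpace ℝ (Fin d))
    (hco : ∀ i, Cocoercive ℓ (F i)) (hsm : StronglyMonotone μ (opAvg F))
    (K : ℕ) (hKμ : 10 * ℓ / μ ≤ (K : ℝ)) (S : ℕ) (hS : 1 ≤ S)
    (z0 : EuclideanSpace ℝ (Fin d)) :
    (∑ jj : Fin S → Fin K → Fin n,
        ‖opAvg F (sarahOuter (2 / (9 * ℓ)) F z0
            (List.ofFn fun s => List.ofFn (jj s)))‖ ^ 2) / (n : ℝ) ^ (S * K)
      ≤ (1 / 2) ^ S * ‖opAvg F z0‖ ^ 2 :=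
  sarah_linear_convergence_general hn ℓ μ hℓ hμ F hco hsm K hKμ S z0

end
end

section
/- Let n ≥ 1 and let F_1, …, F_n : ℝ^d → ℝ^d be arbitrary operators with average F = (1/n)∑_{i=1}^n F_i. Then, with no further assumptions on the F_i, the SARAH inner-loop trajectory satisfies 𝔼[‖F(z^K) − v^K‖²] ≤ ∑_{k=1}^K 𝔼[‖v^k − v^{k−1}‖²]. -/
open Finset

noncomputable section

/-! From a state `(z, v)`, with `z' = z - γ v`, the possible next estimators
`v'_i = F_i(z') - F_i(z) + v` have mean `m = F(z') - F(z) + v` over `i`. By the bias–variance decomposition around `F(z')`, and since the mean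
minimises the sum of squared deviations,
`∑ᵢ ‖F(z') - v'_i‖² = ∑ᵢ ‖v'_i - m‖² + n ‖F(z) - v‖² ≤ ∑ᵢ ‖v'_i - v‖² + n ‖F(z) - v‖²`.
Averaging over the index drawn at step `k + 1`, which the state after `k` steps does not see,
turns this into `𝔼‖F(z^{k+1}) - v^{k+1}‖² ≤ 𝔼‖F(z^k) - v^k‖² + 𝔼‖v^{k+1} - v^k‖²`, and the
claim telescopes from `v⁰ = F(z⁰)`. -/

section BiasVariance

variable {ι E : Type*} [Fintype ι] [NormedAddCommGroup E] [InnerProductSpace ℝ E]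

theorem sum_norm_sub_sq_eq_add_card_mul {X : ι → E} {m : E}
    (hm : (Fintype.card ι : ℝ) • m = ∑ i, X i) (c : E) :
    ∑ i, ‖X i - c‖ ^ 2 = ∑ i, ‖X i - m‖ ^ 2 + Fintype.card ι * ‖m - c‖ ^ 2 := by
  have hdev : ∑ i, (X i - m) = 0 := by
    rw [Finset.sum_sub_distrib, ← hm, Finset.sum_const, Finset.card_univ, Nat.cast_smul_eq_nsmul,
      sub_self]
  have hcross : ∑ i, inner ℝ (X i - m) (m - c) = 0 := by
    rw [← sum_inner, hdev, inner_zero_left]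
  calc ∑ i, ‖X i - c‖ ^ 2
      = ∑ i, (‖X i - m‖ ^ 2 + 2 * inner ℝ (X i - m) (m - c) + ‖m - c‖ ^ 2) := by
        refine Finset.sum_congr rfl fun i _ => ?_
        rw [← norm_add_sq_real, sub_add_sub_cancel]
    _ = ∑ i, ‖X i - m‖ ^ 2 + Fintype.card ι * ‖m - c‖ ^ 2 := by
        rw [Finset.sum_add_distrib, Finset.sum_add_distrib, ← Finset.mul_sum, hcross,
          Finset.sum_const, Finset.card_univ, nsmul_eq_mul]
        ring

theorem sum_norm_sub_mean_sq_le {X : ι → E} {m : E}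
    (hm : (Fintype.card ι : ℝ) • m = ∑ i, X i) (c : E) :
    ∑ i, ‖X i - m‖ ^ 2 ≤ ∑ i, ‖X i - c‖ ^ 2 := by
  rw [sum_norm_sub_sq_eq_add_card_mul hm c]
  exact le_add_of_nonneg_right (by positivity)

end BiasVariance

theorem sum_sum_eq_card_mul_sum_apply {ι α : Type*} [Fintype ι] [DecidableEq ι] [Fintype α]
    (a : ι) (f : (ι → α) → α → ℝ) (hf : ∀ j b, f (Function.update j a b) = f j) :
    ∑ j, ∑ c, f j c = Fintype.card α * ∑ j, f j (j a) := by
  have hswap :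
      Function.Involutive fun p : (ι → α) × α => (Function.update p.1 a p.2, p.1 a) := by
    rintro ⟨j, c⟩
    simp
  calc ∑ j, ∑ c, f j c = ∑ p : (ι → α) × α, f p.1 p.2 := (Fintype.sum_prod_type' _).symm
    _ = ∑ p : (ι → α) × α, f (Function.update p.1 a p.2) (p.1 a) :=
        (Equiv.sum_comp hswap.toPerm (fun p => f p.1 p.2)).symm
    _ = Fintype.card α * ∑ j, f j (j a) := by
        simp only [hf, Fintype.sum_prod_type, Finset.sum_const, Finset.card_univ, nsmul_eq_mul,
          Finset.mul_sum]

section Sarah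

variable {d n : ℕ} (γ : ℝ) (F : Fin n → EuclideanSpace ℝ (Fin d) → EuclideanSpace ℝ (Fin d))

theorem natCast_smul_opAvg (z : EuclideanSpace ℝ (Fin d)) :
    (n : ℝ) • opAvg F z = ∑ i, F i z := by
  rcases Nat.eq_zero_or_pos n with rfl | hn
  · simp
  · simp [opAvg, smul_smul, hn.ne']

theorem sum_norm_opAvg_sub_sarahStep_sq_le
    (p : EuclideanSpace ℝ (Fin d) × EuclideanSpace ℝ (Fin d)) :
    ∑ i, ‖opAvg F (sarahStep γ F i p).1 - (sarahStep γ F i p).2‖ ^ 2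
      ≤ n * ‖opAvg F p.1 - p.2‖ ^ 2 + ∑ i, ‖(sarahStep γ F i p).2 - p.2‖ ^ 2 := by
  set z' := p.1 - γ • p.2
  set m := opAvg F z' - opAvg F p.1 + p.2
  have hm : (Fintype.card (Fin n) : ℝ) • m = ∑ i, (sarahStep γ F i p).2 := by
    change _ = ∑ i, (F i z' - F i p.1 + p.2)
    rw [Fintype.card_fin, smul_add, smul_sub, natCast_smul_opAvg, natCast_smul_opAvg,
      Finset.sum_add_distrib, Finset.sum_sub_distrib, Finset.sum_const, Finset.card_univ,
      Fintype.card_fin, Nat.cast_smul_eq_nsmul]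
  have hbias : m - opAvg F z' = -(opAvg F p.1 - p.2) := by simp only [m]; abel
  calc ∑ i, ‖opAvg F (sarahStep γ F i p).1 - (sarahStep γ F i p).2‖ ^ 2
      = ∑ i, ‖(sarahStep γ F i p).2 - opAvg F z'‖ ^ 2 := by simp_rw [norm_sub_rev]; rfl
    _ = ∑ i, ‖(sarahStep γ F i p).2 - m‖ ^ 2 + n * ‖opAvg F p.1 - p.2‖ ^ 2 := by
        rw [sum_norm_sub_sq_eq_add_card_mul hm, hbias, norm_neg, Fintype.card_fin]
    _ ≤ n * ‖opAvg F p.1 - p.2‖ ^ 2 + ∑ i, ‖(sarahStep γ F i p).2 - p.2‖ ^ 2 := by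
        linarith [sum_norm_sub_mean_sq_le hm p.2]

theorem sarahRun_append_singleton (p : EuclideanSpace ℝ (Fin d) × EuclideanSpace ℝ (Fin d))
    (l : List (Fin n)) (i : Fin n) :
    sarahRun γ F p (l ++ [i]) = sarahStep γ F i (sarahRun γ F p l) := by
  induction l generalizing p with
  | nil => rfl
  | cons a l ih => exact ih _

variable {K : ℕ} (z0 : EuclideanSpace ℝ (Fin d))

theorem sarahTraj_zero (j : Fin K → Fin n) : sarahTraj γ F z0 j 0 = (z0, opAvg F z0) := by
  simp [sarahTraj, sarahRun]

theorem sarahTraj_succ (j : Fin K → Fin n) {k : ℕ} (hk : k < K) :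
    sarahTraj γ F z0 j (k + 1) = sarahStep γ F (j ⟨k, hk⟩) (sarahTraj γ F z0 j k) := by
  have hlen : k < (List.ofFn j).length := by simpa using hk
  simp [sarahTraj, List.take_add_one, List.getElem?_eq_getElem hlen, sarahRun_append_singleton]

theorem sarahTraj_update_of_le (j : Fin K → Fin n) (a : Fin K) (b : Fin n) {k : ℕ}
    (hk : k ≤ a) : sarahTraj γ F z0 (Function.update j a b) k = sarahTraj γ F z0 j k := by
  induction k with
  | zero => simp only [sarahTraj_zero]
  | succ k ih =>
    have hkK : k < K := by omega
    have hka : (⟨k, hkK⟩ : Fin K) ≠ a := by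
      simp only [ne_eq, Fin.ext_iff]
      omega
    rw [sarahTraj_succ _ _ _ _ hkK, sarahTraj_succ _ _ _ _ hkK, ih (by omega),
      Function.update_of_ne hka]

/-- The index drawn at step `k + 1` is uniform and independent of the state after `k` steps. -/
theorem natCast_mul_sum_sarahTraj_succ
    (φ : EuclideanSpace ℝ (Fin d) × EuclideanSpace ℝ (Fin d) →
      EuclideanSpace ℝ (Fin d) × EuclideanSpace ℝ (Fin d) → ℝ) {k : ℕ} (hk : k < K) :
    n * ∑ j : Fin K → Fin n, φ (sarahTraj γ F z0 j k) (sarahTraj γ F z0 j (k + 1))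
      = ∑ j : Fin K → Fin n, ∑ i,
          φ (sarahTraj γ F z0 j k) (sarahStep γ F i (sarahTraj γ F z0 j k)) := by
  classical
  rw [sum_sum_eq_card_mul_sum_apply ⟨k, hk⟩, Fintype.card_fin]
  · simp only [sarahTraj_succ _ _ _ _ hk]
  · intro j b
    funext i
    rw [sarahTraj_update_of_le _ _ _ _ _ _ le_rfl]

theorem sum_sarahTraj_residual_succ_le (hn : 1 ≤ n) {k : ℕ} (hk : k < K) :
    ∑ j : Fin K → Fin n,
        ‖opAvg F (sarahTraj γ F z0 j (k + 1)).1 - (sarahTraj γ F z0 j (k + 1)).2‖ ^ 2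
      ≤ ∑ j : Fin K → Fin n,
          ‖opAvg F (sarahTraj γ F z0 j k).1 - (sarahTraj γ F z0 j k).2‖ ^ 2
        + ∑ j : Fin K → Fin n,
          ‖(sarahTraj γ F z0 j (k + 1)).2 - (sarahTraj γ F z0 j k).2‖ ^ 2 := by
  have hn0 : (0 : ℝ) < n := by exact_mod_cast hn
  refine le_of_mul_le_mul_left ?_ hn0
  rw [mul_add, natCast_mul_sum_sarahTraj_succ γ F z0 (fun _ q => ‖opAvg F q.1 - q.2‖ ^ 2) hk,
    natCast_mul_sum_sarahTraj_succ γ F z0 (fun p q => ‖q.2 - p.2‖ ^ 2) hk, Finset.mul_sum,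
    ← Finset.sum_add_distrib]
  exact Finset.sum_le_sum fun j _ => sum_norm_opAvg_sub_sarahStep_sq_le γ F _

end Sarah

theorem le_add_sum_Icc_of_le_add {A B : ℕ → ℝ} {K : ℕ}
    (h : ∀ k < K, A (k + 1) ≤ A k + B (k + 1)) : A K ≤ A 0 + ∑ k ∈ Finset.Icc 1 K, B k := by
  induction K with
  | zero => simp
  | succ K ih =>
    rw [Finset.sum_Icc_succ_top (by omega)]
    linarith [h K K.lt_succ_self, ih fun k hk => h k (by omega)]

theorem sarah_residual_telescoping_general {d n : ℕ} (hn : 1 ≤ n)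
    (F : Fin n → EuclideanSpace ℝ (Fin d) → EuclideanSpace ℝ (Fin d))
    (γ : ℝ)
    (K : ℕ) (z0 : EuclideanSpace ℝ (Fin d)) :
    (∑ j : Fin K → Fin n,
        ‖opAvg F (sarahTraj γ F z0 j K).1 - (sarahTraj γ F z0 j K).2‖ ^ 2) / (n : ℝ) ^ K
      ≤ ∑ k ∈ Finset.Icc 1 K,
          (∑ j : Fin K → Fin n,
            ‖(sarahTraj γ F z0 j k).2 - (sarahTraj γ F z0 j (k - 1)).2‖ ^ 2) / (n : ℝ) ^ K := by
  have htelescope := le_add_sum_Icc_of_le_add (K := K)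
    (A := fun k => ∑ j : Fin K → Fin n,
      ‖opAvg F (sarahTraj γ F z0 j k).1 - (sarahTraj γ F z0 j k).2‖ ^ 2)
    (B := fun k => ∑ j : Fin K → Fin n,
      ‖(sarahTraj γ F z0 j k).2 - (sarahTraj γ F z0 j (k - 1)).2‖ ^ 2)
    fun k hk => by simpa using sum_sarahTraj_residual_succ_le γ F z0 hn hk
  simp only [sarahTraj_zero, sub_self, norm_zero, zero_pow two_ne_zero, Finset.sum_const_zero,
    zero_add] at htelescope
  rw [← Finset.sum_div]
  gcongr

/-- **Telescoping bound for the SARAH residual.** For arbitrary operators `F_i` with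
average `F`, the SARAH inner loop satisfies
`𝔼[‖F(z^K) - v^K‖²] ≤ ∑_{k=1}^K 𝔼[‖v^k - v^{k-1}‖²]`, where the expectation is the
uniform average over all `n^K` index sequences. -/
theorem sarah_residual_telescoping {d n : ℕ} (hn : 1 ≤ n)
    (F : Fin n → EuclideanSpace ℝ (Fin d) → EuclideanSpace ℝ (Fin d))
    (γ : ℝ) (hγ0 : 0 < γ)
    (K : ℕ) (hK : 1 ≤ K) (z0 : EuclideanSpace ℝ (Fin d)) :
    (∑ j : Fin K → Fin n,
        ‖opAvg F (sarahTraj γ F z0 j K).1 - (sarahTraj γ F z0 j K).2‖ ^ 2) / (n : ℝ) ^ K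
      ≤ ∑ k ∈ Finset.Icc 1 K,
          (∑ j : Fin K → Fin n,
            ‖(sarahTraj γ F z0 j k).2 - (sarahTraj γ F z0 j (k - 1)).2‖ ^ 2) / (n : ℝ) ^ K :=
  sarah_residual_telescoping_general hn F γ K z0

end
end
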